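/- The parametric region in Theorem 1 is convex: for a fixed channel, the set of (R₀,R₁) ∈ ℝ≥0² such that R₀ ≤ min{I(U₁;Y₃), I(U₂;Y₂)} and R₀+R₁ ≤ min{I(U₁;Y₃)+I(X;Y₁|U₁), I(U₂;Y₂)+I(X;Y₁|U₂)} for some Markov triple U₁ → U₂ → X (all finitely valued, composed with the fixed channel p(y₁,y₂,y₃|x)) is a convex subset of ℝ². -/

import Mathlib

open Real BigOperators Finset

noncomputable section

/-- Probability that a random variable `X` takes value `a`, under weight function `μ`. -/
def prob {Ω : Type*} [Fintype Ω] {A : Type*} [DecidableEq A]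
    (μ : Ω → ℝ) (X : Ω → A) (a : A) : ℝ :=
  ∑ ω, if X ω = a then μ ω else 0

/-- Shannon entropy (natural log) of a finitely-valued random variable. -/
def Hent {Ω : Type*} [Fintype Ω] {A : Type*} [Fintype A] [DecidableEq A]
    (μ : Ω → ℝ) (X : Ω → A) : ℝ :=
  ∑ a, Real.negMulLog (prob μ X a)

/-- Mutual information `I(X;Y)`. -/
def MI {Ω : Type*} [Fintype Ω] {A B : Type*} [Fintype A] [DecidableEq A]
    [Fintype B] [DecidableEq B] (μ : Ω → ℝ) (X : Ω → A) (Y : Ω → B) : ℝ :=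
  Hent μ X + Hent μ Y - Hent μ (fun ω => (X ω, Y ω))

/-- Conditional mutual information `I(X;Y|Z)`. -/
def CMI {Ω : Type*} [Fintype Ω] {A B C : Type*} [Fintype A] [DecidableEq A]
    [Fintype B] [DecidableEq B] [Fintype C] [DecidableEq C]
    (μ : Ω → ℝ) (X : Ω → A) (Y : Ω → B) (Z : Ω → C) : ℝ :=
  Hent μ (fun ω => (X ω, Z ω)) + Hent μ (fun ω => (Y ω, Z ω))
    - Hent μ (fun ω => (X ω, Y ω, Z ω)) - Hent μ Z

/-- `μ` is a probability mass function on the finite sample space `Ω`. -/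
def IsProbMeasure {Ω : Type*} [Fintype Ω] (μ : Ω → ℝ) : Prop :=
  (∀ ω, 0 ≤ μ ω) ∧ ∑ ω, μ ω = 1

/-- `X → Y → Z` forms a Markov chain: `X` and `Z` are conditionally independent given `Y`. -/
def Markov {Ω : Type*} [Fintype Ω] {A B C : Type*} [DecidableEq A]
    [DecidableEq B] [DecidableEq C]
    (μ : Ω → ℝ) (X : Ω → A) (Y : Ω → B) (Z : Ω → C) : Prop :=
  ∀ a b c, prob μ (fun ω => (X ω, Y ω, Z ω)) (a, b, c) * prob μ Y b
    = prob μ (fun ω => (X ω, Y ω)) (a, b) * prob μ (fun ω => (Y ω, Z ω)) (b, c)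

end

/-- The rate region of Theorem 1 for a fixed channel `W`: the union over all
auxiliary distributions `p(u₁)p(u₂|u₁)p(x|u₂)` (finite auxiliary alphabets)
of the pairs `(R₀,R₁) ∈ ℝ≥0²` with `R₀ ≤ min{I(U₁;Y₃), I(U₂;Y₂)}` and
`R₀+R₁ ≤ min{I(U₁;Y₃)+I(X;Y₁|U₁), I(U₂;Y₂)+I(X;Y₁|U₂)}`. -/
def capRegionThm1 {𝒳 𝒴₁ 𝒴₂ 𝒴₃ : Type*} [Fintype 𝒳] [DecidableEq 𝒳]
    [Fintype 𝒴₁] [DecidableEq 𝒴₁] [Fintype 𝒴₂] [DecidableEq 𝒴₂]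
    [Fintype 𝒴₃] [DecidableEq 𝒴₃]
    (W : 𝒳 → 𝒴₁ × 𝒴₂ × 𝒴₃ → ℝ) : Set (ℝ × ℝ) :=
  {R | 0 ≤ R.1 ∧ 0 ≤ R.2 ∧
    ∃ (n m : ℕ) (q₁ : Fin n → ℝ) (q₂ : Fin n → Fin m → ℝ) (qx : Fin m → 𝒳 → ℝ),
      (∀ u, 0 ≤ q₁ u) ∧ (∑ u, q₁ u) = 1 ∧
      (∀ u v, 0 ≤ q₂ u v) ∧ (∀ u, (∑ v, q₂ u v) = 1) ∧
      (∀ v x, 0 ≤ qx v x) ∧ (∀ v, (∑ x, qx v x) = 1) ∧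
      (let μ : Fin n × Fin m × 𝒳 × (𝒴₁ × 𝒴₂ × 𝒴₃) → ℝ := fun ω =>
         q₁ ω.1 * q₂ ω.1 ω.2.1 * qx ω.2.1 ω.2.2.1 * W ω.2.2.1 ω.2.2.2
       R.1 ≤ min (MI μ (fun ω => ω.1) (fun ω => ω.2.2.2.2.2))
                 (MI μ (fun ω => ω.2.1) (fun ω => ω.2.2.2.2.1)) ∧
       R.1 + R.2 ≤
         min (MI μ (fun ω => ω.1) (fun ω => ω.2.2.2.2.2)
              + CMI μ (fun ω => ω.2.2.1) (fun ω => ω.2.2.2.1) (fun ω => ω.1))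
             (MI μ (fun ω => ω.2.1) (fun ω => ω.2.2.2.2.1)
              + CMI μ (fun ω => ω.2.2.1) (fun ω => ω.2.2.2.1) (fun ω => ω.2.1)))}

/-! Time sharing: place the two auxiliary triples on disjoint blocks of the alphabets of `U₁` and
`U₂`, with weights `t` and `s`. Since `U₁` (and `U₂`) reveals the block, every entropy term
involving it splits as `h(t) + h(s) + t·H_a + s·H_b`; hence the conditional mutual informations
given `U₁` or `U₂` mix linearly, and in `I(Uᵢ;Y)` the `h` terms cancel while `H(Y)` is concave in
the law, so `I(Uᵢ;Y)` dominates the mixture of the two values. -/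

open Function

section Prob

variable {Ω A B : Type*} [Fintype Ω] [DecidableEq A] [DecidableEq B] {μ : Ω → ℝ}

lemma prob_nonneg (hμ : ∀ ω, 0 ≤ μ ω) (X : Ω → A) (a : A) : 0 ≤ prob μ X a :=
  sum_nonneg fun ω _ => by split_ifs <;> simp [hμ ω]

lemma prob_eq_zero_of_forall_ne (X : Ω → A) {a : A} (h : ∀ ω, X ω ≠ a) : prob μ X a = 0 :=
  sum_eq_zero fun ω _ => if_neg (h ω)

lemma sum_prob [Fintype A] (X : Ω → A) : ∑ a, prob μ X a = ∑ ω, μ ω := by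
  unfold prob
  rw [sum_comm]
  simp

lemma prob_comp_of_injective {f : A → B} (hf : Injective f) (X : Ω → A) (a : A) :
    prob μ (fun ω => f (X ω)) (f a) = prob μ X a := by
  simp only [prob, hf.eq_iff]

end Prob

section Entropy

variable {Ω A B C D : Type*} [Fintype Ω] [Fintype A] [DecidableEq A] [Fintype B] [DecidableEq B]
  [Fintype C] [DecidableEq C] [Fintype D] [DecidableEq D] {μ : Ω → ℝ}

lemma hent_comp_of_injective {f : A → B} (hf : Injective f) (X : Ω → A) :
    Hent μ (fun ω => f (X ω)) = Hent μ X := by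
  refine (Fintype.sum_of_injective f hf _ _ (fun b hb => ?_) fun a => ?_).symm
  · rw [prob_eq_zero_of_forall_ne _ fun ω h => hb ⟨X ω, h⟩, negMulLog_zero]
  · rw [prob_comp_of_injective hf]

lemma mi_comp_left_of_injective {f : A → B} (hf : Injective f) (X : Ω → A) (Y : Ω → C) :
    MI μ (fun ω => f (X ω)) Y = MI μ X Y := by
  have hXY : Hent μ (fun ω => (f (X ω), Y ω)) = Hent μ (fun ω => (X ω, Y ω)) :=
    hent_comp_of_injective (f := Prod.map f id) (hf.prodMap injective_id) fun ω => (X ω, Y ω)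
  rw [MI, MI, hent_comp_of_injective hf, hXY]

lemma cmi_comp_right_of_injective {f : C → D} (hf : Injective f) (X : Ω → A) (Y : Ω → B)
    (Z : Ω → C) : CMI μ X Y (fun ω => f (Z ω)) = CMI μ X Y Z := by
  have hXZ : Hent μ (fun ω => (X ω, f (Z ω))) = Hent μ (fun ω => (X ω, Z ω)) :=
    hent_comp_of_injective (f := Prod.map id f) (injective_id.prodMap hf) fun ω => (X ω, Z ω)
  have hYZ : Hent μ (fun ω => (Y ω, f (Z ω))) = Hent μ (fun ω => (Y ω, Z ω)) :=
    hent_comp_of_injective (f := Prod.map id f) (injective_id.prodMap hf) fun ω => (Y ω, Z ω)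
  have hXYZ : Hent μ (fun ω => (X ω, Y ω, f (Z ω))) = Hent μ (fun ω => (X ω, Y ω, Z ω)) :=
    hent_comp_of_injective (f := Prod.map id (Prod.map id f))
      (injective_id.prodMap (injective_id.prodMap hf)) fun ω => (X ω, Y ω, Z ω)
  rw [CMI, CMI, hXZ, hYZ, hXYZ, hent_comp_of_injective hf]

end Entropy

structure IsTimeSharing {Ω Ωa Ωb : Type*} (μ : Ω → ℝ) (μa : Ωa → ℝ) (μb : Ωb → ℝ) (t s : ℝ)
    (e : Ωa ⊕ Ωb → Ω) : Prop where
  injective : Injective e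
  eq_zero_of_notMem_range : ∀ ω ∉ Set.range e, μ ω = 0
  apply_inl : ∀ ω, μ (e (.inl ω)) = t * μa ω
  apply_inr : ∀ ω, μ (e (.inr ω)) = s * μb ω

namespace IsTimeSharing

variable {Ω Ωa Ωb A B C : Type*} [Fintype Ω] [Fintype Ωa] [Fintype Ωb]
  [DecidableEq A] [DecidableEq B] [DecidableEq C]
  {μ : Ω → ℝ} {μa : Ωa → ℝ} {μb : Ωb → ℝ} {t s : ℝ} {e : Ωa ⊕ Ωb → Ω}

lemma prob_eq (h : IsTimeSharing μ μa μb t s e) (V : Ω → A) (c : A) :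
    prob μ V c = t * prob μa (fun ω => V (e (.inl ω))) c
      + s * prob μb (fun ω => V (e (.inr ω))) c := by
  unfold prob
  rw [← Fintype.sum_of_injective e h.injective (fun i => if V (e i) = c then μ (e i) else 0) _
    (fun ω hω => by simp [h.eq_zero_of_notMem_range ω hω]) fun _ => rfl,
    Fintype.sum_sum_type, mul_sum, mul_sum]
  simp only [h.apply_inl, h.apply_inr, mul_ite, mul_zero]

variable [Fintype A] [Fintype B] [Fintype C]

lemma mul_hent_add_mul_hent_le (h : IsTimeSharing μ μa μb t s e) (hμa : ∀ ω, 0 ≤ μa ω)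
    (hμb : ∀ ω, 0 ≤ μb ω) (ht : 0 ≤ t) (hs : 0 ≤ s) (hts : t + s = 1) (V : Ω → A) :
    t * Hent μa (fun ω => V (e (.inl ω))) + s * Hent μb (fun ω => V (e (.inr ω)))
      ≤ Hent μ V := by
  unfold Hent
  rw [mul_sum, mul_sum, ← sum_add_distrib]
  refine sum_le_sum fun c _ => ?_
  rw [h.prob_eq]
  exact concaveOn_negMulLog.2 (prob_nonneg hμa _ c) (prob_nonneg hμb _ c) ht hs hts

lemma hent_eq_of_disjoint (h : IsTimeSharing μ μa μb t s e) {V : Ω → A}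
    (hV : ∀ ωa ωb, V (e (.inl ωa)) ≠ V (e (.inr ωb))) :
    Hent μ V = (∑ ω, μa ω) * negMulLog t + (∑ ω, μb ω) * negMulLog s
      + t * Hent μa (fun ω => V (e (.inl ω))) + s * Hent μb (fun ω => V (e (.inr ω))) := by
  have hsplit : ∀ c, negMulLog (prob μ V c)
      = negMulLog (t * prob μa (fun ω => V (e (.inl ω))) c)
        + negMulLog (s * prob μb (fun ω => V (e (.inr ω))) c) := by
    intro c
    rw [h.prob_eq]
    by_cases hc : ∃ ωa, V (e (.inl ωa)) = c
    · obtain ⟨ωa, rfl⟩ := hc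
      rw [prob_eq_zero_of_forall_ne _ fun ωb => (hV ωa ωb).symm]
      simp
    · push Not at hc
      rw [prob_eq_zero_of_forall_ne _ hc]
      simp
  unfold Hent
  simp only [hsplit, negMulLog_mul, sum_add_distrib, ← sum_mul, ← mul_sum, sum_prob]
  ring

lemma mul_mi_add_mul_mi_le (h : IsTimeSharing μ μa μb t s e) (hμa : ∀ ω, 0 ≤ μa ω)
    (hμb : ∀ ω, 0 ≤ μb ω) (ht : 0 ≤ t) (hs : 0 ≤ s) (hts : t + s = 1) {X : Ω → A}
    (hX : ∀ ωa ωb, X (e (.inl ωa)) ≠ X (e (.inr ωb))) (Y : Ω → B) :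
    t * MI μa (fun ω => X (e (.inl ω))) (fun ω => Y (e (.inl ω)))
      + s * MI μb (fun ω => X (e (.inr ω))) (fun ω => Y (e (.inr ω))) ≤ MI μ X Y := by
  have hXY := h.hent_eq_of_disjoint (V := fun ω => (X ω, Y ω))
    fun ωa ωb hab => hX ωa ωb (congrArg Prod.fst hab)
  have hY := h.mul_hent_add_mul_hent_le hμa hμb ht hs hts Y
  rw [MI, MI, MI, h.hent_eq_of_disjoint hX, hXY]
  linarith

lemma cmi_eq (h : IsTimeSharing μ μa μb t s e) (X : Ω → A) (Y : Ω → B) {Z : Ω → C}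
    (hZ : ∀ ωa ωb, Z (e (.inl ωa)) ≠ Z (e (.inr ωb))) :
    CMI μ X Y Z
      = t * CMI μa (fun ω => X (e (.inl ω))) (fun ω => Y (e (.inl ω))) (fun ω => Z (e (.inl ω)))
        + s * CMI μb (fun ω => X (e (.inr ω))) (fun ω => Y (e (.inr ω)))
          (fun ω => Z (e (.inr ω))) := by
  rw [CMI, CMI, CMI, h.hent_eq_of_disjoint hZ,
    h.hent_eq_of_disjoint (V := fun ω => (X ω, Z ω)) fun _ _ hab => hZ _ _ (congrArg (·.2) hab),
    h.hent_eq_of_disjoint (V := fun ω => (Y ω, Z ω)) fun _ _ hab => hZ _ _ (congrArg (·.2) hab),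
    h.hent_eq_of_disjoint (V := fun ω => (X ω, Y ω, Z ω))
      fun _ _ hab => hZ _ _ (congrArg (·.2.2) hab)]
  ring

end IsTimeSharing

lemma castAdd_ne_natAdd {m n : ℕ} (i : Fin m) (j : Fin n) : Fin.castAdd n i ≠ Fin.natAdd m j := by
  rw [Ne, Fin.ext_iff, Fin.val_castAdd, Fin.val_natAdd]
  omega

section Construction

variable {𝒳 𝒴 Z : Type*} {n m na ma nb mb : ℕ}

/-- The joint law of `(U₁, U₂, X, Y)` under `p(u₁) p(u₂|u₁) p(x|u₂) W(y|x)`. -/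
def jointPMF (W : 𝒳 → 𝒴 → ℝ) (q₁ : Fin n → ℝ) (q₂ : Fin n → Fin m → ℝ) (qx : Fin m → 𝒳 → ℝ) :
    Fin n × Fin m × 𝒳 × 𝒴 → ℝ :=
  fun ω => q₁ ω.1 * q₂ ω.1 ω.2.1 * qx ω.2.1 ω.2.2.1 * W ω.2.2.1 ω.2.2.2

lemma jointPMF_nonneg {W : 𝒳 → 𝒴 → ℝ} {q₁ : Fin n → ℝ} {q₂ : Fin n → Fin m → ℝ}
    {qx : Fin m → 𝒳 → ℝ} (hW : ∀ x y, 0 ≤ W x y) (hq₁ : ∀ u, 0 ≤ q₁ u)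
    (hq₂ : ∀ u v, 0 ≤ q₂ u v) (hqx : ∀ v x, 0 ≤ qx v x) (ω : Fin n × Fin m × 𝒳 × 𝒴) :
    0 ≤ jointPMF W q₁ q₂ qx ω :=
  mul_nonneg (mul_nonneg (mul_nonneg (hq₁ _) (hq₂ _ _)) (hqx _ _)) (hW _ _)

def blockDiag (qa : Fin na → Fin ma → ℝ) (qb : Fin nb → Fin mb → ℝ) :
    Fin (na + nb) → Fin (ma + mb) → ℝ :=
  Fin.append (fun u => Fin.append (qa u) 0) (fun u => Fin.append 0 (qb u))

lemma blockDiag_nonneg {qa : Fin na → Fin ma → ℝ} {qb : Fin nb → Fin mb → ℝ}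
    (ha : ∀ u v, 0 ≤ qa u v) (hb : ∀ u v, 0 ≤ qb u v) (u : Fin (na + nb)) (v : Fin (ma + mb)) :
    0 ≤ blockDiag qa qb u v := by
  induction u using Fin.addCases <;> induction v using Fin.addCases <;>
    simp [blockDiag, ha, hb]

lemma sum_blockDiag {qa : Fin na → Fin ma → ℝ} {qb : Fin nb → Fin mb → ℝ}
    (ha : ∀ u, ∑ v, qa u v = 1) (hb : ∀ u, ∑ v, qb u v = 1) (u : Fin (na + nb)) :
    ∑ v, blockDiag qa qb u v = 1 := by
  induction u using Fin.addCases <;> simp [blockDiag, Fin.sum_univ_add, ha, hb]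

/-- Places the two auxiliary alphabets side by side: the time-sharing index is encoded in
whether `U₁` and `U₂` fall in the first or the second block of `Fin (_ + _)`. -/
def timeShareEmb :
    (Fin na × Fin ma × Z) ⊕ (Fin nb × Fin mb × Z) → Fin (na + nb) × Fin (ma + mb) × Z :=
  Sum.elim (fun ω => (Fin.castAdd nb ω.1, Fin.castAdd mb ω.2.1, ω.2.2))
    (fun ω => (Fin.natAdd na ω.1, Fin.natAdd ma ω.2.1, ω.2.2))

lemma timeShareEmb_injective :
    Injective (timeShareEmb : (Fin na × Fin ma × Z) ⊕ (Fin nb × Fin mb × Z) → _) := by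
  rintro (⟨u, v, z⟩ | ⟨u, v, z⟩) (⟨u', v', z'⟩ | ⟨u', v', z'⟩) h <;>
    simp [timeShareEmb, castAdd_ne_natAdd, (castAdd_ne_natAdd _ _).symm] at h ⊢ <;> exact h

lemma isTimeSharing_jointPMF (W : 𝒳 → 𝒴 → ℝ) (t s : ℝ) (q1a : Fin na → ℝ)
    (q2a : Fin na → Fin ma → ℝ) (qxa : Fin ma → 𝒳 → ℝ) (q1b : Fin nb → ℝ)
    (q2b : Fin nb → Fin mb → ℝ) (qxb : Fin mb → 𝒳 → ℝ) :
    IsTimeSharing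
      (jointPMF W (Fin.append (fun u => t * q1a u) (fun u => s * q1b u)) (blockDiag q2a q2b)
        (Fin.append qxa qxb))
      (jointPMF W q1a q2a qxa) (jointPMF W q1b q2b qxb) t s timeShareEmb where
  injective := timeShareEmb_injective
  eq_zero_of_notMem_range := by
    rintro ⟨u, v, z⟩ hω
    induction u using Fin.addCases with
    | left u => induction v using Fin.addCases with
      | left v => exact absurd ⟨.inl (u, v, z), rfl⟩ hω
      | right v => simp [jointPMF, blockDiag]
    | right u => induction v using Fin.addCases with
      | left v => simp [jointPMF, blockDiag]
      | right v => exact absurd ⟨.inr (u, v, z), rfl⟩ hω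
  apply_inl _ := by
    simp only [jointPMF, blockDiag, timeShareEmb, Sum.elim_inl, Fin.append_left]
    ring
  apply_inr _ := by
    simp only [jointPMF, blockDiag, timeShareEmb, Sum.elim_inr, Fin.append_right]
    ring

end Construction

namespace IsTimeSharing

variable {Z B C : Type*} [Fintype Z] [Fintype B] [DecidableEq B] [Fintype C] [DecidableEq C]
  {na ma nb mb : ℕ} {μ : Fin (na + nb) × Fin (ma + mb) × Z → ℝ} {μa : Fin na × Fin ma × Z → ℝ}
  {μb : Fin nb × Fin mb × Z → ℝ} {t s : ℝ}

lemma mul_mi_fst_add_mul_mi_fst_le (h : IsTimeSharing μ μa μb t s timeShareEmb)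
    (hμa : ∀ ω, 0 ≤ μa ω) (hμb : ∀ ω, 0 ≤ μb ω) (ht : 0 ≤ t) (hs : 0 ≤ s) (hts : t + s = 1)
    (Y : Z → B) :
    t * MI μa (fun ω => ω.1) (fun ω => Y ω.2.2) + s * MI μb (fun ω => ω.1) (fun ω => Y ω.2.2)
      ≤ MI μ (fun ω => ω.1) (fun ω => Y ω.2.2) := by
  have := h.mul_mi_add_mul_mi_le hμa hμb ht hs hts (X := fun ω => ω.1)
    (fun _ _ => castAdd_ne_natAdd _ _) fun ω => Y ω.2.2
  simpa only [timeShareEmb, Sum.elim_inl, Sum.elim_inr,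
    mi_comp_left_of_injective (Fin.castAdd_injective _ _),
    mi_comp_left_of_injective (Fin.natAdd_injective _ _)] using this

lemma mul_mi_snd_add_mul_mi_snd_le (h : IsTimeSharing μ μa μb t s timeShareEmb)
    (hμa : ∀ ω, 0 ≤ μa ω) (hμb : ∀ ω, 0 ≤ μb ω) (ht : 0 ≤ t) (hs : 0 ≤ s) (hts : t + s = 1)
    (Y : Z → B) :
    t * MI μa (fun ω => ω.2.1) (fun ω => Y ω.2.2) + s * MI μb (fun ω => ω.2.1) (fun ω => Y ω.2.2)
      ≤ MI μ (fun ω => ω.2.1) (fun ω => Y ω.2.2) := by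
  have := h.mul_mi_add_mul_mi_le hμa hμb ht hs hts (X := fun ω => ω.2.1)
    (fun _ _ => castAdd_ne_natAdd _ _) fun ω => Y ω.2.2
  simpa only [timeShareEmb, Sum.elim_inl, Sum.elim_inr,
    mi_comp_left_of_injective (Fin.castAdd_injective _ _),
    mi_comp_left_of_injective (Fin.natAdd_injective _ _)] using this

lemma cmi_fst_eq (h : IsTimeSharing μ μa μb t s timeShareEmb) (X : Z → B) (Y : Z → C) :
    CMI μ (fun ω => X ω.2.2) (fun ω => Y ω.2.2) (fun ω => ω.1)
      = t * CMI μa (fun ω => X ω.2.2) (fun ω => Y ω.2.2) (fun ω => ω.1)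
        + s * CMI μb (fun ω => X ω.2.2) (fun ω => Y ω.2.2) (fun ω => ω.1) := by
  have := h.cmi_eq (fun ω => X ω.2.2) (fun ω => Y ω.2.2) (Z := fun ω => ω.1)
    fun _ _ => castAdd_ne_natAdd _ _
  simpa only [timeShareEmb, Sum.elim_inl, Sum.elim_inr,
    cmi_comp_right_of_injective (Fin.castAdd_injective _ _),
    cmi_comp_right_of_injective (Fin.natAdd_injective _ _)] using this

lemma cmi_snd_eq (h : IsTimeSharing μ μa μb t s timeShareEmb) (X : Z → B) (Y : Z → C) :
    CMI μ (fun ω => X ω.2.2) (fun ω => Y ω.2.2) (fun ω => ω.2.1)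
      = t * CMI μa (fun ω => X ω.2.2) (fun ω => Y ω.2.2) (fun ω => ω.2.1)
        + s * CMI μb (fun ω => X ω.2.2) (fun ω => Y ω.2.2) (fun ω => ω.2.1) := by
  have := h.cmi_eq (fun ω => X ω.2.2) (fun ω => Y ω.2.2) (Z := fun ω => ω.2.1)
    fun _ _ => castAdd_ne_natAdd _ _
  simpa only [timeShareEmb, Sum.elim_inl, Sum.elim_inr,
    cmi_comp_right_of_injective (Fin.castAdd_injective _ _),
    cmi_comp_right_of_injective (Fin.natAdd_injective _ _)] using this

end IsTimeSharing

/-- The two rate constraints of Theorem 1, for mutual informations `I₁ = I(U₁;Y₃)`,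
`I₂ = I(U₂;Y₂)` and conditional ones `C₁ = I(X;Y₁|U₁)`, `C₂ = I(X;Y₁|U₂)`. -/
def RateBounds (R : ℝ × ℝ) (I₁ I₂ C₁ C₂ : ℝ) : Prop :=
  R.1 ≤ min I₁ I₂ ∧ R.1 + R.2 ≤ min (I₁ + C₁) (I₂ + C₂)

lemma RateBounds.smul_add_smul {Ra Rb : ℝ × ℝ}
    {t s I₁ I₂ C₁ C₂ I₁a I₂a C₁a C₂a I₁b I₂b C₁b C₂b : ℝ}
    (ha : RateBounds Ra I₁a I₂a C₁a C₂a) (hb : RateBounds Rb I₁b I₂b C₁b C₂b)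
    (ht : 0 ≤ t) (hs : 0 ≤ s)
    (hI₁ : t * I₁a + s * I₁b ≤ I₁) (hI₂ : t * I₂a + s * I₂b ≤ I₂)
    (hC₁ : C₁ = t * C₁a + s * C₁b) (hC₂ : C₂ = t * C₂a + s * C₂b) :
    RateBounds (t • Ra + s • Rb) I₁ I₂ C₁ C₂ := by
  simp only [RateBounds, le_min_iff, Prod.fst_add, Prod.snd_add, Prod.smul_fst, Prod.smul_snd,
    smul_eq_mul] at ha hb ⊢
  obtain ⟨⟨ha₁, ha₂⟩, ha₃, ha₄⟩ := ha
  obtain ⟨⟨hb₁, hb₂⟩, hb₃, hb₄⟩ := hb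
  refine ⟨⟨?_, ?_⟩, ?_, ?_⟩ <;> nlinarith

theorem capRegionThm1_convex_general {𝒳 𝒴₁ 𝒴₂ 𝒴₃ : Type*} [Fintype 𝒳] [DecidableEq 𝒳]
    [Fintype 𝒴₁] [DecidableEq 𝒴₁] [Fintype 𝒴₂] [DecidableEq 𝒴₂]
    [Fintype 𝒴₃] [DecidableEq 𝒴₃]
    (W : 𝒳 → 𝒴₁ × 𝒴₂ × 𝒴₃ → ℝ)
    (hW0 : ∀ x y, 0 ≤ W x y) :
    Convex ℝ (capRegionThm1 W) := by
  rintro Ra ⟨hRa₁, hRa₂, na, ma, q1a, q2a, qxa, hq1a, hq1a₁, hq2a, hq2a₁, hqxa, hqxa₁, hRa⟩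
    Rb ⟨hRb₁, hRb₂, nb, mb, q1b, q2b, qxb, hq1b, hq1b₁, hq2b, hq2b₁, hqxb, hqxb₁, hRb⟩ t s ht hs hts
  have h := isTimeSharing_jointPMF W t s q1a q2a qxa q1b q2b qxb
  have hμa := jointPMF_nonneg hW0 hq1a hq2a hqxa
  have hμb := jointPMF_nonneg hW0 hq1b hq2b hqxb
  refine ⟨by simp only [Prod.fst_add, Prod.smul_fst, smul_eq_mul]; positivity,
    by simp only [Prod.snd_add, Prod.smul_snd, smul_eq_mul]; positivity,
    na + nb, ma + mb, Fin.append (fun u => t * q1a u) (fun u => s * q1b u), blockDiag q2a q2b,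
    Fin.append qxa qxb,
    (Fin.forall_fin_add _).2 ⟨fun u => by simpa using mul_nonneg ht (hq1a u),
      fun u => by simpa using mul_nonneg hs (hq1b u)⟩,
    by simp [Fin.sum_univ_add, ← mul_sum, hq1a₁, hq1b₁, hts],
    blockDiag_nonneg hq2a hq2b, sum_blockDiag hq2a₁ hq2b₁,
    (Fin.forall_fin_add _).2 ⟨by simpa using hqxa, by simpa using hqxb⟩,
    (Fin.forall_fin_add _).2 ⟨by simpa using hqxa₁, by simpa using hqxb₁⟩, ?_⟩
  -- `hRa`, `hRb` and the goal are `RateBounds` statements once the `let` is unfolded.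
  exact RateBounds.smul_add_smul hRa hRb ht hs
    (h.mul_mi_fst_add_mul_mi_fst_le hμa hμb ht hs hts fun z => z.2.2.2)
    (h.mul_mi_snd_add_mul_mi_snd_le hμa hμb ht hs hts fun z => z.2.2.1)
    (h.cmi_fst_eq (·.1) (·.2.1)) (h.cmi_snd_eq (·.1) (·.2.1))

/-- For any fixed channel, the region of Theorem 1 is a convex subset of `ℝ²`. -/
theorem capRegionThm1_convex {𝒳 𝒴₁ 𝒴₂ 𝒴₃ : Type*} [Fintype 𝒳] [DecidableEq 𝒳]
    [Fintype 𝒴₁] [DecidableEq 𝒴₁] [Fintype 𝒴₂] [DecidableEq 𝒴₂]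
    [Fintype 𝒴₃] [DecidableEq 𝒴₃]
    (W : 𝒳 → 𝒴₁ × 𝒴₂ × 𝒴₃ → ℝ)
    (hW0 : ∀ x y, 0 ≤ W x y) (hW1 : ∀ x, (∑ y, W x y) = 1) :
    Convex ℝ (capRegionThm1 W) :=
  capRegionThm1_convex_general W hW0
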